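/- arXiv:2204.01577 — 3 statements merged into one kernel-verified Lean document; each statement's English description precedes it below -/
import Mathlib

section
/- Let f be a holomorphic injective function on the unit disk 𝔻. Then for every r ∈ (0,1), ∫₀^{2π} f♯(re^{it})² dt = (2/r²) ∬_{|z|<r} h_f(z) f♯(z)² dA(z). -/
open Complex MeasureTheory Set Real

/-- The spherical derivative `f♯(z) = |f'(z)| / (1 + |f(z)|²)`. -/
noncomputable def sphDeriv (f : ℂ → ℂ) (z : ℂ) : ℝ :=
  ‖deriv f z‖ / (1 + ‖f z‖ ^ 2)

/-- The auxiliary function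
`h_f(z) = Re(1 + z f''(z)/f'(z) − 2 z f'(z) conj(f(z)) / (1 + |f(z)|²))`. -/
noncomputable def hfun (f : ℂ → ℂ) (z : ℂ) : ℝ :=
  (1 + z * deriv (deriv f) z / deriv f z -
    2 * z * deriv f z * (starRingEnd ℂ) (f z) /
      ((1 + ‖f z‖ ^ 2 : ℝ) : ℂ)).re

/-- `f` is spherically convex on the unit disk: holomorphic, injective,
and `h_f ≥ 0` on the disk. -/
def SphConvex (f : ℂ → ℂ) : Prop :=
  DifferentiableOn ℂ f (Metric.ball 0 1) ∧
  Set.InjOn f (Metric.ball 0 1) ∧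
  ∀ z ∈ Metric.ball (0 : ℂ) 1, 0 ≤ hfun f z

/-- `f` is a spherical isometry: `f(z) = e^{iθ}(z − a)/(1 + conj(a) z)` on the disk. -/
def SphIsometry (f : ℂ → ℂ) : Prop :=
  ∃ (θ : ℝ) (a : ℂ),
    (∀ z ∈ Metric.ball (0 : ℂ) 1, 1 + (starRingEnd ℂ) a * z ≠ 0) ∧
    ∀ z ∈ Metric.ball (0 : ℂ) 1,
      f z = Complex.exp (θ * Complex.I) * (z - a) / (1 + (starRingEnd ℂ) a * z)

/-- The spherical area `Ar_S f(r𝔻) = ∬_{|z|<r} f♯(z)² dA(z)`. -/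
noncomputable def sphArea (f : ℂ → ℂ) (r : ℝ) : ℝ :=
  ∫ z in Metric.ball (0 : ℂ) r, (sphDeriv f z) ^ 2

/-- The spherical length `Le_S f(r𝕋) = r ∫₀^{2π} f♯(r e^{it}) dt`. -/
noncomputable def sphLen (f : ℂ → ℂ) (r : ℝ) : ℝ :=
  r * ∫ t in (0 : ℝ)..(2 * π), sphDeriv f ((r : ℂ) * Complex.exp (t * Complex.I))

/-- `f` is centrally normalized: `f(0) = 0`, `f''(0) = 0`, `f'(0) > 0`, and
`(1 − |z|²) f♯(z) ≤ f'(0)` on the disk. -/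
def CentNormalized (f : ℂ → ℂ) : Prop :=
  f 0 = 0 ∧ deriv (deriv f) 0 = 0 ∧ (deriv f 0).im = 0 ∧ 0 < (deriv f 0).re ∧
  ∀ z ∈ Metric.ball (0 : ℂ) 1,
    (1 - ‖z‖ ^ 2) * sphDeriv f z ≤ (deriv f 0).re

/-!
Along a ray `σ ↦ σ e`, the derivative of `σ² / 2 · f♯(σ e)²` is `σ h_f(σ e) f♯(σ e)²`, which is
exactly the polar-coordinate integrand of `h_f (f♯)²`. So the radial integral over `[0, r]` is
`r² / 2 · f♯(r e)²`, and integrating over the angle gives the identity.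
-/

open Metric
open scoped ComplexConjugate

theorem integral_ball_eq_intervalIntegral_polar {E : Type*} [NormedAddCommGroup E]
    [NormedSpace ℝ E] {G : ℂ → E} {r : ℝ} (hr : 0 ≤ r) (hG : ContinuousOn G (closedBall 0 r)) :
    ∫ z in ball (0 : ℂ) r, G z =
      ∫ t in (0 : ℝ)..(2 * π), ∫ s in (0 : ℝ)..r, s • G (s * exp (t * I)) := by
  set P : ℝ × ℝ → E := fun p => p.1 • G (p.1 * exp (p.2 * I))
  have hsymm (p : ℝ × ℝ) : Complex.polarCoord.symm p = p.1 * exp (p.2 * I) := by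
    simp [Complex.exp_mul_I, ← Complex.ofReal_cos, ← Complex.ofReal_sin]
  have hP : IntegrableOn P (Ioo 0 r ×ˢ Ioo (-π) π) (volume.prod volume) := by
    rw [← Measure.volume_eq_prod]
    refine (ContinuousOn.integrableOn_compact (isCompact_Icc.prod isCompact_Icc) ?_).mono_set
      (prod_mono Ioo_subset_Icc_self Ioo_subset_Icc_self)
    refine continuousOn_fst.smul (hG.comp (by fun_prop) ?_)
    rintro ⟨s, t⟩ ⟨hs, -⟩
    simp [Complex.norm_exp_ofReal_mul_I, abs_of_nonneg hs.1, hs.2]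
  have hper : Function.Periodic (fun t : ℝ => ∫ s in (0 : ℝ)..r, P (s, t)) (2 * π) := by
    intro t
    simp only [P]
    push_cast
    simp_rw [Complex.exp_mul_I_periodic (t : ℂ)]
  calc ∫ z in ball (0 : ℂ) r, G z
      = ∫ p in polarCoord.target,
          p.1 • (ball (0 : ℂ) r).indicator G (Complex.polarCoord.symm p) := by
        rw [Complex.integral_comp_polarCoord_symm, integral_indicator measurableSet_ball]
    _ = ∫ p in polarCoord.target, (Iio r ×ˢ univ).indicator P p := by
        refine setIntegral_congr_fun polarCoord.open_target.measurableSet fun p hp => ?_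
        have hball : Complex.polarCoord.symm p ∈ ball 0 r ↔ p ∈ Iio r ×ˢ univ := by
          simp [abs_of_pos (show 0 < p.1 from hp.1)]
        by_cases hpr : p ∈ Iio r ×ˢ univ
        · rw [indicator_of_mem hpr, indicator_of_mem (hball.2 hpr), hsymm]
        · rw [indicator_of_notMem hpr, indicator_of_notMem (mt hball.1 hpr), smul_zero]
    _ = ∫ p in Ioo 0 r ×ˢ Ioo (-π) π, P p := by
        rw [setIntegral_indicator (measurableSet_Iio.prod MeasurableSet.univ)]
        congr 2
        ext ⟨s, t⟩
        simp only [polarCoord_target, mem_inter_iff, mem_prod, mem_Ioi, mem_Ioo, mem_Iio, mem_univ,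
          and_true]
        tauto
    _ = ∫ t in Ioo (-π) π, ∫ s in Ioo 0 r, P (s, t) := by
        rw [Measure.volume_eq_prod, ← setIntegral_prod_swap, setIntegral_prod]
        · rfl
        · rw [IntegrableOn, ← Measure.prod_restrict] at hP ⊢
          exact hP.swap
    _ = ∫ t in (-π)..π, ∫ s in (0 : ℝ)..r, P (s, t) := by
        simp_rw [intervalIntegral.integral_of_le hr,
          intervalIntegral.integral_of_le (neg_le_self pi_pos.le), integral_Ioc_eq_integral_Ioo]
    _ = _ := by
        simpa [show -π + 2 * π = π by ring] using hper.intervalIntegral_add_eq (-π) 0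

-- Where `deriv f z = 0` the quotient inside `hfun` is junk (`x / 0 = 0`), but both sides vanish;
-- the right side has no `deriv f` in a denominator.
theorem hfun_mul_sphDeriv_sq (f : ℂ → ℂ) (z : ℂ) :
    hfun f z * sphDeriv f z ^ 2 =
      (‖deriv f z‖ ^ 2 * (1 + ‖f z‖ ^ 2)
        + (z * deriv (deriv f) z * conj (deriv f z)).re * (1 + ‖f z‖ ^ 2)
        - 2 * ‖deriv f z‖ ^ 2 * (z * deriv f z * conj (f z)).re) / (1 + ‖f z‖ ^ 2) ^ 3 := by
  by_cases h : deriv f z = 0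
  · simp [sphDeriv, h]
  have hquot : (z * deriv (deriv f) z / deriv f z).re =
      (z * deriv (deriv f) z * conj (deriv f z)).re / ‖deriv f z‖ ^ 2 := by
    rw [div_eq_mul_inv, Complex.inv_def, ← mul_assoc, Complex.re_mul_ofReal,
      Complex.normSq_eq_norm_sq, div_eq_mul_inv]
  have hD : (2 * z * deriv f z * conj (f z) / ((1 + ‖f z‖ ^ 2 : ℝ) : ℂ)).re =
      2 * (z * deriv f z * conj (f z)).re / (1 + ‖f z‖ ^ 2) := by
    rw [Complex.div_ofReal_re, ← Complex.re_ofReal_mul, Complex.ofReal_ofNat, ← mul_assoc,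
      ← mul_assoc]
  have hpos : 0 < ‖deriv f z‖ := norm_pos_iff.mpr h
  rw [hfun, Complex.sub_re, Complex.add_re, Complex.one_re, hquot, hD, sphDeriv]
  field_simp

theorem continuousOn_hfun_mul_sphDeriv_sq {f : ℂ → ℂ} {U : Set ℂ} (hU : IsOpen U)
    (hf : DifferentiableOn ℂ f U) :
    ContinuousOn (fun z => hfun f z * sphDeriv f z ^ 2) U := by
  have h₀ := hf.continuousOn
  have h₁ := (hf.deriv hU).continuousOn
  have h₂ := ((hf.deriv hU).deriv hU).continuousOn
  simp_rw [hfun_mul_sphDeriv_sq]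
  exact ContinuousOn.div (by fun_prop) (by fun_prop) fun z _ => by positivity

theorem hasDerivAt_sq_mul_sphDeriv_sq_ray {f : ℂ → ℂ} {e : ℂ} {s : ℝ}
    (hf : DifferentiableAt ℂ f (s * e)) (hf' : DifferentiableAt ℂ (deriv f) (s * e)) :
    HasDerivAt (fun σ : ℝ => σ ^ 2 / 2 * sphDeriv f (σ * e) ^ 2)
      (s * (hfun f (s * e) * sphDeriv f (s * e) ^ 2)) s := by
  have ray {g : ℂ → ℂ} (hg : DifferentiableAt ℂ g (s * e)) :
      HasDerivAt (fun σ : ℝ => g (σ * e)) (deriv g (s * e) * e) s :=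
    (hg.hasDerivAt.comp (s : ℂ) (hasDerivAt_mul_const e)).comp_ofReal
  have hN := (ray hf').norm_sq
  have hD := ((ray hf).norm_sq.const_add 1).pow 2
  have hden : (1 + ‖f (s * e)‖ ^ 2) ^ 2 ≠ 0 := by positivity
  have hsph : (fun σ : ℝ => σ ^ 2 / 2 * sphDeriv f (σ * e) ^ 2) =
      fun σ : ℝ => σ ^ 2 / 2 * (‖deriv f (σ * e)‖ ^ 2 / (1 + ‖f (σ * e)‖ ^ 2) ^ 2) := by
    simp [sphDeriv, div_pow]
  rw [hsph]
  refine (((hasDerivAt_pow 2 s).div_const 2).mul (hN.div hD hden)).congr_deriv ?_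
  have hre (a b : ℂ) : ((s : ℂ) * e * a * b).re = s * (a * e * b).re := by
    rw [← Complex.re_ofReal_mul]
    ring_nf
  rw [hfun_mul_sphDeriv_sq, hre, hre]
  simp only [Complex.inner, Pi.div_apply, Pi.pow_apply]
  field_simp
  ring

theorem integral_mul_hfun_mul_sphDeriv_sq_ray {f : ℂ → ℂ} {U : Set ℂ} (hU : IsOpen U)
    (hf : DifferentiableOn ℂ f U) {e : ℂ} {r : ℝ} (hray : ∀ s ∈ uIcc 0 r, (s : ℂ) * e ∈ U) :
    ∫ s in (0 : ℝ)..r, s * (hfun f (s * e) * sphDeriv f (s * e) ^ 2) =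
      r ^ 2 / 2 * sphDeriv f (r * e) ^ 2 := by
  have hderiv (s : ℝ) (hs : s ∈ uIcc 0 r) :=
    hasDerivAt_sq_mul_sphDeriv_sq_ray (hf.differentiableAt (hU.mem_nhds (hray s hs)))
      ((hf.deriv hU).differentiableAt (hU.mem_nhds (hray s hs)))
  have hcont : ContinuousOn (fun s : ℝ => s * (hfun f (s * e) * sphDeriv f (s * e) ^ 2))
      (uIcc 0 r) :=
    continuousOn_id.mul ((continuousOn_hfun_mul_sphDeriv_sq hU hf).comp (by fun_prop) hray)
  rw [intervalIntegral.integral_eq_sub_of_hasDerivAt hderiv hcont.intervalIntegrable]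
  simp

theorem circle_mean_eq_area_integral_general (f : ℂ → ℂ)
    (hd : DifferentiableOn ℂ f (Metric.ball 0 1)) :
    ∀ r ∈ Set.Ioo (0 : ℝ) 1,
      (∫ t in (0 : ℝ)..(2 * π),
          sphDeriv f ((r : ℂ) * Complex.exp (t * Complex.I)) ^ 2) =
        (2 / r ^ 2) *
          ∫ z in Metric.ball (0 : ℂ) r, hfun f z * sphDeriv f z ^ 2 := by
  rintro r ⟨hr₀, hr₁⟩
  have hray (t : ℝ) : ∀ s ∈ uIcc 0 r, (s : ℂ) * exp (t * I) ∈ ball (0 : ℂ) 1 := by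
    intro s hs
    rw [uIcc_of_le hr₀.le] at hs
    simpa [Complex.norm_exp_ofReal_mul_I, abs_of_nonneg hs.1] using hs.2.trans_lt hr₁
  rw [integral_ball_eq_intervalIntegral_polar hr₀.le
    ((continuousOn_hfun_mul_sphDeriv_sq isOpen_ball hd).mono (closedBall_subset_ball hr₁))]
  simp_rw [smul_eq_mul, integral_mul_hfun_mul_sphDeriv_sq_ray isOpen_ball hd (hray _),
    intervalIntegral.integral_const_mul]
  rw [← mul_assoc, show 2 / r ^ 2 * (r ^ 2 / 2) = 1 by field_simp, one_mul]

/-- Identity relating circle means of `(f♯)²` to an area integral of `h_f (f♯)²`. -/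
theorem circle_mean_eq_area_integral (f : ℂ → ℂ)
    (hd : DifferentiableOn ℂ f (Metric.ball 0 1))
    (hi : Set.InjOn f (Metric.ball 0 1)) :
    ∀ r ∈ Set.Ioo (0 : ℝ) 1,
      (∫ t in (0 : ℝ)..(2 * π),
          sphDeriv f ((r : ℂ) * Complex.exp (t * Complex.I)) ^ 2) =
        (2 / r ^ 2) *
          ∫ z in Metric.ball (0 : ℂ) r, hfun f z * sphDeriv f z ^ 2 :=
  circle_mean_eq_area_integral_general f hd
end

section
/- Let f be a holomorphic injective function on the unit disk 𝔻. Then for every r ∈ (0,1) the Gauss–Bonnet identity ∫₀^{2π} h_f(re^{it}) dt = 2π − 4 ∬_{|z|<r} f♯(z)² dA(z) holds; that is, the total spherical curvature of f(r𝕋) equals 2π minus four times the spherical area of f(r𝔻). -/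
open Complex MeasureTheory Set Real

section GBAux

open Metric Filter Topology intervalIntegral

/-! ### Auxiliary definitions -/

/-- `Q_f(z) = 2 z f'(z) conj(f z) / (1 + f z conj (f z))`. -/
noncomputable def Qf (f : ℂ → ℂ) (z : ℂ) : ℂ :=
  2 * z * deriv f z * (starRingEnd ℂ) (f z) / (1 + f z * (starRingEnd ℂ) (f z))

/-- Real-directional derivative of `Qf` at `z` in direction `c`. -/
noncomputable def Ed (f : ℂ → ℂ) (z c : ℂ) : ℂ :=
  ((2 * ((c * deriv f z + z * deriv (deriv f) z * c) * (starRingEnd ℂ) (f z) +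
      z * deriv f z * (starRingEnd ℂ) (deriv f z * c))) * (1 + f z * (starRingEnd ℂ) (f z)) -
    (2 * z * deriv f z * (starRingEnd ℂ) (f z)) *
      (deriv f z * c * (starRingEnd ℂ) (f z) + f z * (starRingEnd ℂ) (deriv f z * c))) /
    (1 + f z * (starRingEnd ℂ) (f z)) ^ 2

lemma den_ne (w : ℂ) : (1 + w * (starRingEnd ℂ) w) ≠ 0 := by
  rw [Complex.mul_conj]
  intro h
  have := congrArg Complex.re h
  simp [Complex.add_re] at this
  nlinarith [Complex.normSq_nonneg w]

lemma den_cast (w : ℂ) : ((1 + ‖w‖ ^ 2 : ℝ) : ℂ) = 1 + w * (starRingEnd ℂ) w := by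
  rw [Complex.mul_conj, Complex.sq_norm]
  push_cast
  ring

/-! ### Nonvanishing of the derivative of an injective holomorphic map -/

lemma freq_ne (z₀ : ℂ) : ∃ᶠ z in 𝓝 z₀, z ≠ z₀ :=
  ((eventually_mem_nhdsWithin (s := {z₀}ᶜ) (a := z₀)).frequently).filter_mono nhdsWithin_le_nhds

lemma deriv_ne_zero_aux (f : ℂ → ℂ) (z₀ : ℂ) (n : ℕ) (g : ℂ → ℂ)
    (hi : Set.InjOn f (Metric.ball 0 1))
    (hmemD : ∀ᶠ z in 𝓝 z₀, z ∈ Metric.ball (0:ℂ) 1)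
    (hg_an : AnalyticAt ℂ g z₀) (hg_ne : g z₀ ≠ 0)
    (hg_eq : ∀ᶠ z in 𝓝 z₀, f z - f z₀ = (z - z₀) ^ n * g z)
    (hn0 : n ≠ 0) (hn2 : 2 ≤ n) : False := by
  set F : ℂ → ℂ := fun z => f z - f z₀ with hF
  have hnC : ((n:ℂ)) ≠ 0 := Nat.cast_ne_zero.mpr hn0
  set c : ℂ := (g z₀) ^ ((n:ℂ)⁻¹) with hc
  have hcn : c ^ n = g z₀ := Complex.cpow_nat_inv_pow _ hn0
  have hc0 : c ≠ 0 := fun h => hg_ne (by rw [← hcn, h, zero_pow hn0])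
  set h : ℂ → ℂ := fun z => c * Complex.exp ((n:ℂ)⁻¹ * Complex.log (g z / g z₀)) with hh
  have hhan : AnalyticAt ℂ h z₀ := by
    refine analyticAt_const.mul ((analyticAt_const.mul
      ((hg_an.div analyticAt_const hg_ne).clog ?_)).cexp)
    show g z₀ / g z₀ ∈ _
    rw [div_self hg_ne]
    exact Complex.one_mem_slitPlane
  have hgne_ev : ∀ᶠ z in 𝓝 z₀, g z ≠ 0 := hg_an.continuousAt.eventually_ne hg_ne
  have hpow : ∀ᶠ z in 𝓝 z₀, h z ^ n = g z := by
    filter_upwards [hgne_ev] with z hz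
    have : ((n:ℂ)) * ((n:ℂ)⁻¹ * Complex.log (g z / g z₀)) = Complex.log (g z / g z₀) := by
      field_simp
    rw [hh]
    simp only [mul_pow, ← Complex.exp_nat_mul, hcn, this,
      Complex.exp_log (div_ne_zero hz hg_ne)]
    field_simp
  set H : ℂ → ℂ := fun z => (z - z₀) * h z with hH
  have hHan : AnalyticAt ℂ H z₀ := (analyticAt_id.sub analyticAt_const).mul hhan
  have hFH : ∀ᶠ z in 𝓝 z₀, F z = H z ^ n := by
    filter_upwards [hg_eq, hpow] with z h1 h2
    rw [hF, hH]; simp only [mul_pow, ← h2] at h1 ⊢; exact h1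
  have hH0 : H z₀ = 0 := by simp [hH]
  have hhz₀ : h z₀ = c := by simp [hh, div_self hg_ne, Complex.log_one]
  have hHderiv : HasDerivAt H c z₀ := by
    have := ((hasDerivAt_id z₀).sub_const z₀).mul hhan.differentiableAt.hasDerivAt
    simp [hhz₀] at this; exact this
  have hnotconst : ¬ ∀ᶠ z in 𝓝 z₀, H z = H z₀ := by
    intro hcst
    have h0 : deriv H z₀ = 0 := by
      rw [Filter.EventuallyEq.deriv_eq hcst]; simp
    rw [hHderiv.deriv] at h0; exact hc0 h0
  have hmap : 𝓝 (0:ℂ) ≤ Filter.map H (𝓝 z₀) := by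
    have := (hHan.eventually_constant_or_nhds_le_map_nhds).resolve_left hnotconst
    rwa [hH0] at this
  obtain ⟨U, hU_nhds, hU⟩ := Filter.eventually_iff_exists_mem.mp (hmemD.and hFH)
  have himg : H '' U ∈ 𝓝 (0:ℂ) := hmap (Filter.image_mem_map hU_nhds)
  obtain ⟨ε, hε, hballsub⟩ := Metric.mem_nhds_iff.mp himg
  set ζ : ℂ := ((ε/2 : ℝ) : ℂ) with hζ
  have hζ0 : ζ ≠ 0 := by
    simp only [hζ, ne_eq, Complex.ofReal_eq_zero]
    positivity
  set ω : ℂ := Complex.exp (((2 * π / n : ℝ) : ℂ) * Complex.I) with hω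
  have hων : ω ^ n = 1 := by
    rw [hω, ← Complex.exp_nat_mul, ← Complex.exp_two_pi_mul_I]
    congr 1
    push_cast
    field_simp
  have hω1 : ω ≠ 1 := by
    intro h1
    rw [hω, Complex.exp_eq_one_iff] at h1
    obtain ⟨k, hk⟩ := h1
    have hk' : ((2 * π / n : ℝ) : ℂ) = (k : ℂ) * (2 * π) := by
      have : ((2 * π / n : ℝ) : ℂ) * Complex.I = ((k : ℂ) * (2 * π)) * Complex.I := by
        rw [hk]; ring
      exact mul_right_cancel₀ Complex.I_ne_zero this
    have hkR : (2 * π / n : ℝ) = (k : ℝ) * (2 * π) := by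
      exact_mod_cast hk'
    have hnR : (0:ℝ) < n := by positivity
    have hπ := Real.pi_pos
    have hkpos : (0:ℝ) < (k:ℝ) := by
      have : 0 < (2 * π / n : ℝ) := by positivity
      nlinarith
    have hklt : (k:ℝ) < 1 := by
      have h2n : (2:ℝ) ≤ n := by exact_mod_cast hn2
      have : (2 * π / n : ℝ) ≤ π := by
        rw [div_le_iff₀ hnR]
        nlinarith
      nlinarith
    have h1 : 0 < k := by exact_mod_cast hkpos
    have h2 : k < 1 := by exact_mod_cast hklt
    omega
  have hωabs : ‖ω‖ = 1 := Complex.norm_exp_ofReal_mul_I _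
  have hζmem : ζ ∈ H '' U := hballsub (by
    simp only [Metric.mem_ball, dist_zero_right, hζ]
    rw [Complex.norm_real, Real.norm_eq_abs]
    rw [abs_of_pos (by positivity)]
    linarith)
  have hζωmem : ζ * ω ∈ H '' U := hballsub (by
    simp only [Metric.mem_ball, dist_zero_right, norm_mul, hωabs, mul_one]
    rw [hζ, Complex.norm_real, Real.norm_eq_abs, abs_of_pos (by positivity)]
    linarith)
  obtain ⟨z₁, hz₁U, hz₁⟩ := hζmem
  obtain ⟨z₂, hz₂U, hz₂⟩ := hζωmem
  have hne : z₁ ≠ z₂ := by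
    intro hzz
    rw [hzz] at hz₁
    have : ζ * ω = ζ := hz₂.symm.trans hz₁
    exact hω1 ((mul_right_eq_self₀.mp this).resolve_right hζ0)
  have hfeq : f z₁ = f z₂ := by
    have e1 : F z₁ = ζ ^ n := by rw [(hU z₁ hz₁U).2, hz₁]
    have e2 : F z₂ = ζ ^ n := by rw [(hU z₂ hz₂U).2, hz₂, mul_pow, hων, mul_one]
    have := e1.trans e2.symm
    simpa [hF, sub_left_inj] using this
  exact hne (hi (hU z₁ hz₁U).1 (hU z₂ hz₂U).1 hfeq)

/-- An injective holomorphic function on the unit disk has nonvanishing derivative. -/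
lemma deriv_ne_zero_of_injOn (f : ℂ → ℂ)
    (hd : DifferentiableOn ℂ f (Metric.ball 0 1))
    (hi : Set.InjOn f (Metric.ball 0 1)) :
    ∀ z₀ ∈ Metric.ball (0:ℂ) 1, deriv f z₀ ≠ 0 := by
  intro z₀ hz₀ hder
  have hball : IsOpen (Metric.ball (0:ℂ) 1) := Metric.isOpen_ball
  have han : AnalyticOnNhd ℂ f (Metric.ball 0 1) := hd.analyticOnNhd hball
  set F : ℂ → ℂ := fun z => f z - f z₀ with hF
  have hFan : AnalyticAt ℂ F z₀ := (han z₀ hz₀).sub analyticAt_const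
  have hmemD : ∀ᶠ z in 𝓝 z₀, z ∈ Metric.ball (0:ℂ) 1 := hball.mem_nhds hz₀
  by_cases hev : ∀ᶠ z in 𝓝 z₀, F z = 0
  · obtain ⟨z, ⟨hzD, hz0⟩, hzne⟩ := ((hmemD.and hev).and_frequently (freq_ne z₀)).exists
    exact hzne (hi hzD hz₀ (by simpa [F, sub_eq_zero] using hz0))
  · obtain ⟨n, g, hg_an, hg_ne, hg_eq⟩ := hFan.exists_eventuallyEq_pow_smul_nonzero_iff.mpr hev
    simp only [smul_eq_mul] at hg_eq
    have hn0 : n ≠ 0 := by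
      rintro rfl
      have := hg_eq.self_of_nhds
      simp [F] at this
      exact hg_ne (by rw [← this])
    have hn1 : n ≠ 1 := by
      rintro rfl
      have hdF : deriv F z₀ = 0 := by
        have : deriv F z₀ = deriv f z₀ := by
          simp [F, deriv_sub_const]
        rw [this, hder]
      have h2 : HasDerivAt (fun z => (z - z₀) ^ 1 * g z) (g z₀) z₀ := by
        have := (((hasDerivAt_id z₀).sub_const z₀).mul (hg_an.differentiableAt.hasDerivAt))
        simp at this; simp only [pow_one]; exact this
      have : deriv F z₀ = g z₀ := by
        rw [Filter.EventuallyEq.deriv_eq hg_eq]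
        exact h2.deriv
      exact hg_ne (by rw [← this, hdF])
    exact deriv_ne_zero_aux f z₀ n g hi hmemD hg_an hg_ne hg_eq hn0 (by omega)

/-! ### Derivative computations -/

lemma comp_curve {g : ℂ → ℂ} {γ : ℝ → ℂ} {τ : ℝ} {c d : ℂ}
    (hg : HasDerivAt g d (γ τ)) (hγ : HasDerivAt γ c τ) :
    HasDerivAt (fun x => g (γ x)) (d * c) τ := by
  have := (hg.hasFDerivAt.restrictScalars ℝ).comp_hasDerivAt τ hγ
  simp [mul_comm] at this; exact this.congr_deriv (mul_comm c d)

lemma hasDerivAt_f (f : ℂ → ℂ) (hd : DifferentiableOn ℂ f (Metric.ball 0 1)) {z : ℂ}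
    (hz : z ∈ Metric.ball (0:ℂ) 1) : HasDerivAt f (deriv f z) z :=
  (hd.differentiableAt (Metric.isOpen_ball.mem_nhds hz)).hasDerivAt

lemma hasDerivAt_df (f : ℂ → ℂ) (hd : DifferentiableOn ℂ f (Metric.ball 0 1)) {z : ℂ}
    (hz : z ∈ Metric.ball (0:ℂ) 1) : HasDerivAt (deriv f) (deriv (deriv f) z) z :=
  (((hd.analyticOnNhd Metric.isOpen_ball).deriv z hz).differentiableAt).hasDerivAt

lemma hasDerivAt_Qf (f : ℂ → ℂ) (hd : DifferentiableOn ℂ f (Metric.ball 0 1))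
    {γ : ℝ → ℂ} {τ : ℝ} {c : ℂ} (hγ : HasDerivAt γ c τ) (hz : γ τ ∈ Metric.ball (0:ℂ) 1) :
    HasDerivAt (fun x => Qf f (γ x)) (Ed f (γ τ) c) τ := by
  have hA := comp_curve (hasDerivAt_f f hd hz) hγ
  have hB := comp_curve (hasDerivAt_df f hd hz) hγ
  have hAc : HasDerivAt (fun x => (starRingEnd ℂ) (f (γ x)))
      ((starRingEnd ℂ) (deriv f (γ τ) * c)) τ := hA.star
  have hNu := ((hγ.mul hB).const_mul (2:ℂ)).mul hAc
  have hDe := (hA.mul hAc).const_add (1:ℂ)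
  have hQ := hNu.div hDe (den_ne (f (γ τ)))
  have heq : (fun x => Qf f (γ x)) =
      (fun x => 2 * (γ x * deriv f (γ x)) * (starRingEnd ℂ) (f (γ x)) /
        (1 + f (γ x) * (starRingEnd ℂ) (f (γ x)))) := by
    funext x; unfold Qf; ring
  rw [heq]
  refine hQ.congr_deriv ?_
  unfold Ed
  simp only [Pi.mul_apply]
  ring

lemma key_alg (f : ℂ → ℂ) {s t : ℝ} :
    (s:ℂ) * Ed f ((s:ℂ) * Complex.exp (t*Complex.I)) (Complex.exp ((t:ℂ)*Complex.I)) +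
      Complex.I * Ed f ((s:ℂ) * Complex.exp (t*Complex.I))
        (((s:ℂ) * Complex.exp (t*Complex.I)) * Complex.I)
      = ((4 * s^2 * (sphDeriv f ((s:ℂ) * Complex.exp (t*Complex.I)))^2 : ℝ) : ℂ) := by
  set u : ℂ := Complex.exp ((t:ℂ)*Complex.I) with hu
  have hu0 : u ≠ 0 := Complex.exp_ne_zero _
  have huc : (starRingEnd ℂ) u = u⁻¹ :=
    (Complex.inv_eq_conj (Complex.norm_exp_ofReal_mul_I t)).symm
  set z : ℂ := (s:ℂ) * u with hz
  set A := f z with hA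
  set B := deriv f z with hB
  set B₂ := deriv (deriv f) z with hB₂
  have hsph : ((sphDeriv f z : ℝ) : ℂ) =
      ((‖B‖ : ℝ) : ℂ) / ((1 + ‖A‖ ^ 2 : ℝ) : ℂ) := by
    unfold sphDeriv
    push_cast
    ring
  have habsB : ((‖B‖ : ℝ) : ℂ)^2 = B * (starRingEnd ℂ) B := by
    rw [← Complex.ofReal_pow, Complex.sq_norm, Complex.mul_conj]
  have habsA : ((‖A‖ : ℝ) : ℂ)^2 = A * (starRingEnd ℂ) A := by
    rw [← Complex.ofReal_pow, Complex.sq_norm, Complex.mul_conj]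
  have hrhs : ((4 * s^2 * (sphDeriv f z)^2 : ℝ) : ℂ) =
      4 * (s:ℂ)^2 * (B * (starRingEnd ℂ) B) / (1 + A * (starRingEnd ℂ) A)^2 := by
    push_cast
    rw [hsph]
    rw [div_pow, ← habsB]
    rw [← habsA]
    push_cast
    ring_nf
  rw [hrhs]
  have hden := den_ne A
  have hden' := den_ne (f ((s:ℂ) * u))
  unfold Ed
  simp only [hA, hB, hz]
  simp only [map_mul, Complex.conj_I, Complex.conj_ofReal, huc, ← hA, ← hB, ← hB₂]
  field_simp
  ring_nf
  simp only [Complex.I_sq]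
  ring

end GBAux
section GBAux2
open Metric Filter Topology intervalIntegral

lemma contOn_df (f : ℂ → ℂ) (hd : DifferentiableOn ℂ f (Metric.ball 0 1)) :
    ContinuousOn (deriv f) (Metric.ball 0 1) :=
  ((hd.analyticOnNhd Metric.isOpen_ball).deriv).continuousOn

lemma contOn_ddf (f : ℂ → ℂ) (hd : DifferentiableOn ℂ f (Metric.ball 0 1)) :
    ContinuousOn (deriv (deriv f)) (Metric.ball 0 1) :=
  (((hd.analyticOnNhd Metric.isOpen_ball).deriv).deriv).continuousOn

lemma contOn_Ed_alg {β : Type*} [TopologicalSpace β] {Z C A B B2 : β → ℂ} {K : Set β}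
    (hZ : ContinuousOn Z K) (hC : ContinuousOn C K) (hA : ContinuousOn A K)
    (hB : ContinuousOn B K) (hB2 : ContinuousOn B2 K)
    (hne : ∀ x ∈ K, (1 + A x * (starRingEnd ℂ) (A x)) ≠ 0) :
    ContinuousOn (fun x =>
      ((2 * ((C x * B x + Z x * B2 x * C x) * (starRingEnd ℂ) (A x) +
          Z x * B x * (starRingEnd ℂ) (B x * C x))) * (1 + A x * (starRingEnd ℂ) (A x)) -
        (2 * Z x * B x * (starRingEnd ℂ) (A x)) *
          (B x * C x * (starRingEnd ℂ) (A x) + A x * (starRingEnd ℂ) (B x * C x))) /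
        (1 + A x * (starRingEnd ℂ) (A x)) ^ 2) K := by
  have h1' : ContinuousOn (fun x => (starRingEnd ℂ) (A x)) K := hA.star
  have h2c : ContinuousOn (fun x => (starRingEnd ℂ) (B x * C x)) K := (hB.mul hC).star
  exact ContinuousOn.div (by fun_prop) (by fun_prop) (fun x hx => pow_ne_zero _ (hne x hx))

lemma contOn_Ed (f : ℂ → ℂ) (hd : DifferentiableOn ℂ f (Metric.ball 0 1))
    {β : Type*} [TopologicalSpace β] {Z C : β → ℂ} {K : Set β}
    (hZ : ContinuousOn Z K) (hC : ContinuousOn C K)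
    (hmaps : ∀ x ∈ K, Z x ∈ Metric.ball (0:ℂ) 1) :
    ContinuousOn (fun x => Ed f (Z x) (C x)) K := by
  have h1 : ContinuousOn (fun x => f (Z x)) K := (hd.continuousOn).comp hZ hmaps
  have h2 : ContinuousOn (fun x => deriv f (Z x)) K := (contOn_df f hd).comp hZ hmaps
  have h3 : ContinuousOn (fun x => deriv (deriv f) (Z x)) K := (contOn_ddf f hd).comp hZ hmaps
  unfold Ed
  exact contOn_Ed_alg hZ hC h1 h2 h3 (fun x _ => den_ne _)

lemma contOn_Qf_alg {β : Type*} [TopologicalSpace β] {Z A B : β → ℂ} {K : Set β}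
    (hZ : ContinuousOn Z K) (hA : ContinuousOn A K) (hB : ContinuousOn B K)
    (hne : ∀ x ∈ K, (1 + A x * (starRingEnd ℂ) (A x)) ≠ 0) :
    ContinuousOn (fun x =>
      2 * Z x * B x * (starRingEnd ℂ) (A x) / (1 + A x * (starRingEnd ℂ) (A x))) K := by
  have h1' : ContinuousOn (fun x => (starRingEnd ℂ) (A x)) K := hA.star
  exact ContinuousOn.div (by fun_prop) (by fun_prop) hne

lemma contOn_Qf (f : ℂ → ℂ) (hd : DifferentiableOn ℂ f (Metric.ball 0 1))
    {β : Type*} [TopologicalSpace β] {Z : β → ℂ} {K : Set β}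
    (hZ : ContinuousOn Z K) (hmaps : ∀ x ∈ K, Z x ∈ Metric.ball (0:ℂ) 1) :
    ContinuousOn (fun x => Qf f (Z x)) K := by
  have h1 : ContinuousOn (fun x => f (Z x)) K := (hd.continuousOn).comp hZ hmaps
  have h2 : ContinuousOn (fun x => deriv f (Z x)) K := (contOn_df f hd).comp hZ hmaps
  unfold Qf
  exact contOn_Qf_alg hZ h1 h2 (fun x _ => den_ne _)

lemma contOn_sph (f : ℂ → ℂ) (hd : DifferentiableOn ℂ f (Metric.ball 0 1)) :
    ContinuousOn (fun z => (sphDeriv f z)^2) (Metric.ball 0 1) := by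
  unfold sphDeriv
  have h1 : ContinuousOn (fun z => ‖deriv f z‖) (Metric.ball (0:ℂ) 1) :=
    continuous_norm.comp_continuousOn (contOn_df f hd)
  have h2 : ContinuousOn (fun z => (1 + ‖f z‖^2 : ℝ)) (Metric.ball (0:ℂ) 1) := by
    have := continuous_norm.comp_continuousOn hd.continuousOn
    fun_prop
  refine (h1.div h2 (fun z _ => ?_)).pow 2
  have : (0:ℝ) ≤ ‖f z‖^2 := sq_nonneg _
  intro h; nlinarith

lemma circle_mem_ball {r s : ℝ} (hs : |s| ≤ r) (hr1 : r < 1) (t : ℝ) :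
    (s:ℂ) * Complex.exp ((t:ℝ) * Complex.I) ∈ Metric.ball (0:ℂ) 1 := by
  simp only [Metric.mem_ball, dist_zero_right, norm_mul,
    Complex.norm_real, Real.norm_eq_abs, Complex.norm_exp_ofReal_mul_I, mul_one]
  linarith [abs_nonneg s]

/-- Part A: the mean value of `z f''/f'` over the circle vanishes. -/
lemma partA (f : ℂ → ℂ) (hd : DifferentiableOn ℂ f (Metric.ball 0 1))
    (hi : Set.InjOn f (Metric.ball 0 1)) {r : ℝ} (hr0 : 0 < r) (hr1 : r < 1) :
    (∫ t in (0:ℝ)..(2*π), (((r:ℂ) * Complex.exp (t * Complex.I)) *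
      deriv (deriv f) ((r:ℂ) * Complex.exp (t * Complex.I)) /
      deriv f ((r:ℂ) * Complex.exp (t * Complex.I))).re) = 0 := by
  have hne := deriv_ne_zero_of_injOn f hd hi
  set g : ℂ → ℂ := fun z => z * deriv (deriv f) z / deriv f z with hg
  set r' : ℝ := (1+r)/2 with hr'
  have hrr' : r < r' := by rw [hr']; linarith
  have hr'1 : r' < 1 := by rw [hr']; linarith
  have hsub : Metric.ball (0:ℂ) r' ⊆ Metric.ball (0:ℂ) 1 :=
    Metric.ball_subset_ball (le_of_lt hr'1)
  have hgd : DifferentiableOn ℂ g (Metric.ball 0 r') := by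
    intro z hz
    have hz1 : z ∈ Metric.ball (0:ℂ) 1 := hsub hz
    have hddf : DifferentiableAt ℂ (deriv (deriv f)) z :=
      (((hd.analyticOnNhd Metric.isOpen_ball).deriv.deriv) z hz1).differentiableAt
    exact ((differentiableAt_fun_id.mul hddf).div
      (hasDerivAt_df f hd hz1).differentiableAt (hne z hz1)).differentiableWithinAt
  have hdiffcl : DiffContOnCl ℂ g (Metric.ball 0 r) := by
    have : DifferentiableOn ℂ g (closure (Metric.ball (0:ℂ) r)) := by
      rw [closure_ball (0:ℂ) (ne_of_gt hr0)]
      exact hgd.mono (Metric.closedBall_subset_ball hrr')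
    exact this.diffContOnCl
  have hint := hdiffcl.circleIntegral_sub_inv_smul (Metric.mem_ball_self hr0)
  have hg0 : g 0 = 0 := by simp [hg]
  rw [hg0, smul_zero] at hint
  simp only [circleIntegral, deriv_circleMap, sub_zero, smul_eq_mul] at hint
  have hcongr : (∫ t in (0:ℝ)..(2*π), circleMap 0 r t * Complex.I *
        ((circleMap 0 r t)⁻¹ * g (circleMap 0 r t)))
      = ∫ t in (0:ℝ)..(2*π), Complex.I * g (circleMap 0 r t) := by
    apply intervalIntegral.integral_congr
    intro t _
    have hz : circleMap 0 r t ≠ 0 := circleMap_ne_center (ne_of_gt hr0)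
    field_simp
  rw [hcongr, intervalIntegral.integral_const_mul] at hint
  have hzero : (∫ t in (0:ℝ)..(2*π), g (circleMap 0 r t)) = 0 :=
    (mul_eq_zero.mp hint).resolve_left Complex.I_ne_zero
  have hmaps : ∀ t ∈ Set.uIcc (0:ℝ) (2*π), circleMap 0 r t ∈ Metric.ball (0:ℂ) 1 := by
    intro t _
    simpa [circleMap] using circle_mem_ball (s := r) (by rw [abs_of_pos hr0]) hr1 t
  have hcont : ContinuousOn (fun t : ℝ => g (circleMap 0 r t)) (Set.uIcc (0:ℝ) (2*π)) := by
    have hC : ContinuousOn (fun t : ℝ => circleMap 0 r t) (Set.uIcc (0:ℝ) (2*π)) :=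
      (continuous_circleMap 0 r).continuousOn
    have h2 : ContinuousOn (fun t : ℝ => deriv (deriv f) (circleMap 0 r t))
        (Set.uIcc (0:ℝ) (2*π)) := (contOn_ddf f hd).comp hC hmaps
    have h3 : ContinuousOn (fun t : ℝ => deriv f (circleMap 0 r t))
        (Set.uIcc (0:ℝ) (2*π)) := (contOn_df f hd).comp hC hmaps
    exact ContinuousOn.div (hC.mul h2) h3 (fun t ht => hne _ (hmaps t ht))
  have hintg : IntervalIntegrable (fun t : ℝ => g (circleMap 0 r t))
      MeasureTheory.volume 0 (2*π) := hcont.intervalIntegrable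
  have hre := ContinuousLinearMap.intervalIntegral_comp_comm Complex.reCLM hintg
  have : (∫ t in (0:ℝ)..(2*π), (g (circleMap 0 r t)).re) = 0 := by
    rw [show (fun t : ℝ => (g (circleMap 0 r t)).re)
        = fun t : ℝ => Complex.reCLM (g (circleMap 0 r t)) from rfl] at *
    rw [hre, hzero]
    simp
  simpa [g, circleMap] using this

end GBAux2
section GBAux3
open Metric Filter Topology intervalIntegral

lemma polar_symm_eq (p : ℝ × ℝ) :
    Complex.polarCoord.symm p = (p.1:ℂ) * Complex.exp ((p.2:ℂ) * Complex.I) := by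
  rw [Complex.polarCoord_symm_apply, Complex.exp_mul_I]
  push_cast
  ring

lemma periodic_circle (g : ℂ → ℝ) (s : ℝ) :
    Function.Periodic (fun t : ℝ => g ((s:ℂ) * Complex.exp ((t:ℂ) * Complex.I))) (2*π) := by
  intro t
  have h : ((t + 2*π : ℝ) : ℂ) * Complex.I = (t:ℂ)*Complex.I + 2*(π:ℂ)*Complex.I := by
    push_cast; ring
  simp only [h, Complex.exp_add, Complex.exp_two_pi_mul_I, mul_one]

lemma polar_ball (F : ℂ → ℝ) (hF : ContinuousOn F (Metric.ball 0 1)) {r : ℝ}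
    (hr0 : 0 < r) (hr1 : r < 1) :
    ∫ z in Metric.ball (0:ℂ) r, F z
      = ∫ s in (0:ℝ)..r, s * ∫ t in (0:ℝ)..(2*π), F ((s:ℂ) * Complex.exp ((t:ℂ) * Complex.I)) := by
  have hm : Continuous (fun p : ℝ × ℝ => (p.1:ℂ) * Complex.exp ((p.2:ℂ) * Complex.I)) := by
    have h1 : Continuous (fun p : ℝ × ℝ => ((p.1:ℝ):ℂ)) :=
      Complex.continuous_ofReal.comp continuous_fst
    have h2 : Continuous (fun p : ℝ × ℝ => Complex.exp ((p.2:ℂ) * Complex.I)) :=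
      Complex.continuous_exp.comp
        (((Complex.continuous_ofReal.comp continuous_snd)).mul continuous_const)
    exact h1.mul h2
  have hKmaps : ∀ p : ℝ × ℝ, p ∈ (Set.Icc (0:ℝ) r ×ˢ Set.Icc (-π) π) →
      (p.1:ℂ) * Complex.exp ((p.2:ℂ) * Complex.I) ∈ Metric.ball (0:ℂ) 1 := by
    intro p hp
    exact circle_mem_ball (by rw [_root_.abs_of_nonneg hp.1.1]; exact hp.1.2) hr1 p.2
  set G : ℝ × ℝ → ℝ := fun p => p.1 * F ((p.1:ℂ) * Complex.exp ((p.2:ℂ) * Complex.I)) with hG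
  have hGcont : ContinuousOn G (Set.Icc (0:ℝ) r ×ˢ Set.Icc (-π) π) :=
    (continuous_fst.continuousOn).mul (hF.comp hm.continuousOn hKmaps)
  have hGint : IntegrableOn G (Set.Ioo (0:ℝ) r ×ˢ Set.Ioo (-π) π) := by
    refine (hGcont.integrableOn_compact (isCompact_Icc.prod isCompact_Icc)).mono_set ?_
    exact Set.prod_mono Set.Ioo_subset_Icc_self Set.Ioo_subset_Icc_self
  have key := Complex.integral_comp_polarCoord_symm
    (fun z => Set.indicator (Metric.ball (0:ℂ) r) F z)
  rw [MeasureTheory.integral_indicator measurableSet_ball] at key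
  rw [← key]
  have hSsub : (Set.Ioo (0:ℝ) r ×ˢ Set.Ioo (-π) π) ⊆ _root_.polarCoord.target := by
    rw [show _root_.polarCoord.target = Set.Ioi (0:ℝ) ×ˢ Set.Ioo (-π) π from rfl]
    exact Set.prod_mono (fun x hx => hx.1) le_rfl
  have hSmeas : MeasurableSet (Set.Ioo (0:ℝ) r ×ˢ Set.Ioo (-π) π) :=
    measurableSet_Ioo.prod measurableSet_Ioo
  have hTmeas : MeasurableSet _root_.polarCoord.target := by
    rw [show _root_.polarCoord.target = Set.Ioi (0:ℝ) ×ˢ Set.Ioo (-π) π from rfl]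
    exact measurableSet_Ioi.prod measurableSet_Ioo
  have hcongr : ∀ p ∈ _root_.polarCoord.target,
      p.1 • Set.indicator (Metric.ball (0:ℂ) r) F (Complex.polarCoord.symm p)
      = Set.indicator (Set.Ioo (0:ℝ) r ×ˢ Set.Ioo (-π) π) G p := by
    intro p hp
    rw [show _root_.polarCoord.target = Set.Ioi (0:ℝ) ×ˢ Set.Ioo (-π) π from rfl] at hp
    have hp1 : 0 < p.1 := hp.1
    have habs : ‖Complex.polarCoord.symm p‖ = p.1 := by
      rw [Complex.norm_polarCoord_symm, abs_of_pos hp1]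
    by_cases hlt : p.1 < r
    · rw [Set.indicator_of_mem, Set.indicator_of_mem]
      · rw [hG, polar_symm_eq]; simp [smul_eq_mul]
      · exact ⟨⟨hp1, hlt⟩, hp.2⟩
      · rw [Metric.mem_ball, dist_zero_right, habs]; exact hlt
    · rw [Set.indicator_of_notMem, Set.indicator_of_notMem, smul_zero]
      · intro hmem; exact hlt (by simpa [Set.mem_prod, Set.mem_Ioo] using hmem.1.2)
      · rw [Metric.mem_ball, dist_zero_right, habs]; exact hlt
  rw [MeasureTheory.setIntegral_congr_fun hTmeas hcongr]
  rw [MeasureTheory.setIntegral_indicator hSmeas,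
    Set.inter_eq_self_of_subset_right hSsub]
  rw [MeasureTheory.Measure.volume_eq_prod] at hGint ⊢
  rw [MeasureTheory.setIntegral_prod _ hGint]
  rw [intervalIntegral.integral_of_le (le_of_lt hr0),
    MeasureTheory.integral_Ioc_eq_integral_Ioo]
  refine MeasureTheory.integral_congr_ae (Filter.Eventually.of_forall fun s => ?_)
  have hper := periodic_circle F s
  have h1 : (∫ t in (0:ℝ)..(2*π), F ((s:ℂ) * Complex.exp ((t:ℂ) * Complex.I)))
      = ∫ t in (-π)..π, F ((s:ℂ) * Complex.exp ((t:ℂ) * Complex.I)) := by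
    have := hper.intervalIntegral_add_eq (-π) 0
    have hπ : -π + 2*π = π := by ring
    rw [hπ, zero_add] at this
    exact this.symm
  dsimp only
  rw [h1, intervalIntegral.integral_of_le (by linarith [Real.pi_pos] : -π ≤ π),
    MeasureTheory.integral_Ioc_eq_integral_Ioo, ← MeasureTheory.integral_const_mul]

end GBAux3
section GBAux4
open Metric Filter Topology intervalIntegral

lemma hasDerivAt_sline (t s : ℝ) :
    HasDerivAt (fun σ : ℝ => (σ:ℂ) * Complex.exp ((t:ℂ) * Complex.I))
      (Complex.exp ((t:ℂ) * Complex.I)) s := by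
  simpa using Complex.ofRealCLM.hasDerivAt.mul_const (Complex.exp ((t:ℂ) * Complex.I))

lemma hasDerivAt_circ (s t : ℝ) :
    HasDerivAt (fun τ : ℝ => (s:ℂ) * Complex.exp ((τ:ℂ) * Complex.I))
      ((s:ℂ) * Complex.exp ((t:ℂ) * Complex.I) * Complex.I) t := by
  have h := hasDerivAt_circleMap 0 s t
  have he : (circleMap 0 s) = fun τ : ℝ => (s:ℂ) * Complex.exp ((τ:ℂ) * Complex.I) := by
    funext τ; simp [circleMap]
  rw [he] at h
  simpa [circleMap] using h

lemma contOn_circle_map (s : ℝ) {K : Set ℝ} :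
    ContinuousOn (fun t : ℝ => (s:ℂ) * Complex.exp ((t:ℂ) * Complex.I)) K := by
  fun_prop

/-- FTC in the angular variable: integral of `(Ed₂).im` over a period vanishes. -/
lemma intIm_zero (f : ℂ → ℂ) (hd : DifferentiableOn ℂ f (Metric.ball 0 1))
    {r s : ℝ} (hs : |s| ≤ r) (hr1 : r < 1) :
    (∫ t in (0:ℝ)..(2*π), (Ed f ((s:ℂ) * Complex.exp ((t:ℂ)*Complex.I))
       (((s:ℂ) * Complex.exp ((t:ℂ)*Complex.I)) * Complex.I)).im) = 0 := by
  have hderiv : ∀ t ∈ Set.uIcc (0:ℝ) (2*π),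
      HasDerivAt (fun τ : ℝ => (Qf f ((s:ℂ) * Complex.exp ((τ:ℂ)*Complex.I))).im)
        ((Ed f ((s:ℂ) * Complex.exp ((t:ℂ)*Complex.I))
          (((s:ℂ) * Complex.exp ((t:ℂ)*Complex.I)) * Complex.I)).im) t := by
    intro t _
    have hQ := hasDerivAt_Qf f hd (hasDerivAt_circ s t) (circle_mem_ball hs hr1 t)
    simpa [Function.comp_def] using Complex.imCLM.hasFDerivAt.comp_hasDerivAt t hQ
  have hZ : ContinuousOn (fun t : ℝ => (s:ℂ) * Complex.exp ((t:ℂ)*Complex.I))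
      (Set.uIcc (0:ℝ) (2*π)) := contOn_circle_map s
  have hC : ContinuousOn (fun t : ℝ => ((s:ℂ) * Complex.exp ((t:ℂ)*Complex.I)) * Complex.I)
      (Set.uIcc (0:ℝ) (2*π)) := hZ.mul continuousOn_const
  have hcont := Complex.continuous_im.comp_continuousOn
      (contOn_Ed f hd hZ hC (fun t _ => circle_mem_ball hs hr1 t))
  rw [intervalIntegral.integral_eq_sub_of_hasDerivAt hderiv hcont.intervalIntegrable]
  have h2 : ((2*π : ℝ):ℂ) * Complex.I = 2*(π:ℂ)*Complex.I := by push_cast; ring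
  have h0 : ((0 : ℝ):ℂ) * Complex.I = 0 := by push_cast; ring
  rw [h2, h0, Complex.exp_two_pi_mul_I, Complex.exp_zero]
  ring

/-- FTC in the radial variable. -/
lemma intRe_FTC (f : ℂ → ℂ) (hd : DifferentiableOn ℂ f (Metric.ball 0 1))
    {r : ℝ} (hr0 : 0 < r) (hr1 : r < 1) (t : ℝ) :
    (∫ s in (0:ℝ)..r, (Ed f ((s:ℂ)*Complex.exp ((t:ℂ)*Complex.I))
        (Complex.exp ((t:ℂ)*Complex.I))).re)
      = (Qf f ((r:ℂ) * Complex.exp ((t:ℂ)*Complex.I))).re := by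
  have habs : ∀ s ∈ Set.uIcc (0:ℝ) r, |s| ≤ r := by
    intro s hs
    rw [Set.uIcc_of_le hr0.le] at hs
    rw [_root_.abs_of_nonneg hs.1]; exact hs.2
  have hderiv : ∀ s ∈ Set.uIcc (0:ℝ) r,
      HasDerivAt (fun σ : ℝ => (Qf f ((σ:ℂ)*Complex.exp ((t:ℂ)*Complex.I))).re)
        ((Ed f ((s:ℂ)*Complex.exp ((t:ℂ)*Complex.I)) (Complex.exp ((t:ℂ)*Complex.I))).re) s := by
    intro s hs
    have hQ := hasDerivAt_Qf f hd (hasDerivAt_sline t s) (circle_mem_ball (habs s hs) hr1 t)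
    simpa [Function.comp_def] using Complex.reCLM.hasFDerivAt.comp_hasDerivAt s hQ
  have hZ : ContinuousOn (fun s : ℝ => (s:ℂ) * Complex.exp ((t:ℂ)*Complex.I))
      (Set.uIcc (0:ℝ) r) := by fun_prop
  have hcont := Complex.continuous_re.comp_continuousOn
      (contOn_Ed f hd (C := fun _ : ℝ => Complex.exp ((t:ℂ)*Complex.I)) hZ continuousOn_const
        (fun s hs => circle_mem_ball (habs s hs) hr1 t))
  rw [intervalIntegral.integral_eq_sub_of_hasDerivAt hderiv hcont.intervalIntegrable]
  have h0 : ((0:ℝ):ℂ) * Complex.exp ((t:ℂ)*Complex.I) = 0 := by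
    push_cast; ring
  rw [h0]
  have : Qf f 0 = 0 := by unfold Qf; simp
  rw [this]
  simp

/-- Fubini swap for the double integral of `(Ed₁).re`. -/
lemma swap_int (f : ℂ → ℂ) (hd : DifferentiableOn ℂ f (Metric.ball 0 1))
    {r : ℝ} (hr0 : 0 < r) (hr1 : r < 1) :
    (∫ s in (0:ℝ)..r, ∫ t in (0:ℝ)..(2*π),
        (Ed f ((s:ℂ)*Complex.exp ((t:ℂ)*Complex.I)) (Complex.exp ((t:ℂ)*Complex.I))).re)
    = ∫ t in (0:ℝ)..(2*π), ∫ s in (0:ℝ)..r,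
        (Ed f ((s:ℂ)*Complex.exp ((t:ℂ)*Complex.I)) (Complex.exp ((t:ℂ)*Complex.I))).re := by
  have h2π : (0:ℝ) ≤ 2*π := by positivity
  have hK : IsCompact (Set.Icc (0:ℝ) r ×ˢ Set.Icc (0:ℝ) (2*π)) := isCompact_Icc.prod isCompact_Icc
  have hZ : ContinuousOn (fun p : ℝ × ℝ => (p.1:ℂ) * Complex.exp ((p.2:ℂ) * Complex.I))
      (Set.Icc (0:ℝ) r ×ˢ Set.Icc (0:ℝ) (2*π)) := by fun_prop
  have hC : ContinuousOn (fun p : ℝ × ℝ => Complex.exp ((p.2:ℂ) * Complex.I))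
      (Set.Icc (0:ℝ) r ×ˢ Set.Icc (0:ℝ) (2*π)) := by fun_prop
  have hmaps : ∀ p : ℝ × ℝ, p ∈ (Set.Icc (0:ℝ) r ×ˢ Set.Icc (0:ℝ) (2*π)) →
      (p.1:ℂ) * Complex.exp ((p.2:ℂ) * Complex.I) ∈ Metric.ball (0:ℂ) 1 := by
    intro p hp
    exact circle_mem_ball (by rw [_root_.abs_of_nonneg hp.1.1]; exact hp.1.2) hr1 p.2
  have hcont := Complex.continuous_re.comp_continuousOn (contOn_Ed f hd hZ hC hmaps)
  have hint : MeasureTheory.Integrable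
      (Function.uncurry (fun s t : ℝ => (Ed f ((s:ℂ)*Complex.exp ((t:ℂ)*Complex.I))
        (Complex.exp ((t:ℂ)*Complex.I))).re))
      ((MeasureTheory.volume.restrict (Set.Ioc (0:ℝ) r)).prod
        (MeasureTheory.volume.restrict (Set.Ioc (0:ℝ) (2*π)))) := by
    rw [MeasureTheory.Measure.prod_restrict, ← MeasureTheory.Measure.volume_eq_prod]
    exact (hcont.integrableOn_compact hK).mono_set
      (Set.prod_mono Set.Ioc_subset_Icc_self Set.Ioc_subset_Icc_self)
  simp only [intervalIntegral.integral_of_le hr0.le, intervalIntegral.integral_of_le h2π]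
  exact MeasureTheory.integral_integral_swap hint

/-- Part B: the circle integral of `Re Qf` equals `4` times the spherical area. -/
lemma partB (f : ℂ → ℂ) (hd : DifferentiableOn ℂ f (Metric.ball 0 1))
    {r : ℝ} (hr0 : 0 < r) (hr1 : r < 1) :
    (∫ t in (0:ℝ)..(2*π), (Qf f ((r:ℂ) * Complex.exp ((t:ℂ)*Complex.I))).re)
      = 4 * ∫ z in Metric.ball (0:ℂ) r, (sphDeriv f z)^2 := by
  rw [polar_ball _ (contOn_sph f hd) hr0 hr1]
  have hstep1 : (∫ t in (0:ℝ)..(2*π), (Qf f ((r:ℂ) * Complex.exp ((t:ℂ)*Complex.I))).re)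
      = ∫ t in (0:ℝ)..(2*π), ∫ s in (0:ℝ)..r,
          (Ed f ((s:ℂ)*Complex.exp ((t:ℂ)*Complex.I)) (Complex.exp ((t:ℂ)*Complex.I))).re := by
    refine intervalIntegral.integral_congr (fun t _ => ?_)
    exact (intRe_FTC f hd hr0 hr1 t).symm
  rw [hstep1, ← swap_int f hd hr0 hr1]
  rw [← intervalIntegral.integral_const_mul]
  refine intervalIntegral.integral_congr_ae (MeasureTheory.ae_of_all _ (fun s hs => ?_))
  rw [Set.uIoc_of_le hr0.le] at hs
  have hs0 : s ≠ 0 := ne_of_gt hs.1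
  have hsr : |s| ≤ r := by rw [_root_.abs_of_pos hs.1]; exact hs.2
  -- s * Φ(s) = 4 s² ψ(s) + 0
  have hkey : ∀ t : ℝ,
      s * (Ed f ((s:ℂ)*Complex.exp ((t:ℂ)*Complex.I)) (Complex.exp ((t:ℂ)*Complex.I))).re
      = 4*s^2*(sphDeriv f ((s:ℂ)*Complex.exp ((t:ℂ)*Complex.I)))^2
        + (Ed f ((s:ℂ)*Complex.exp ((t:ℂ)*Complex.I))
            (((s:ℂ)*Complex.exp ((t:ℂ)*Complex.I)) * Complex.I)).im := by
    intro t
    have := congrArg Complex.re (key_alg f (s := s) (t := t))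
    simp only [Complex.add_re, Complex.mul_re, Complex.ofReal_re, Complex.ofReal_im,
      Complex.I_re, Complex.I_im, zero_mul, one_mul, zero_sub, mul_zero, sub_zero] at this
    linarith
  have hZ : ContinuousOn (fun t : ℝ => (s:ℂ) * Complex.exp ((t:ℂ)*Complex.I))
      (Set.uIcc (0:ℝ) (2*π)) := contOn_circle_map s
  have hmapsC : ∀ t ∈ Set.uIcc (0:ℝ) (2*π),
      (s:ℂ) * Complex.exp ((t:ℂ)*Complex.I) ∈ Metric.ball (0:ℂ) 1 :=
    fun t _ => circle_mem_ball hsr hr1 t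
  have hsphcont : ContinuousOn
      (fun t : ℝ => (sphDeriv f ((s:ℂ)*Complex.exp ((t:ℂ)*Complex.I)))^2)
      (Set.uIcc (0:ℝ) (2*π)) := (contOn_sph f hd).comp hZ hmapsC
  have hEdIm : ContinuousOn
      (fun t : ℝ => (Ed f ((s:ℂ)*Complex.exp ((t:ℂ)*Complex.I))
        (((s:ℂ)*Complex.exp ((t:ℂ)*Complex.I)) * Complex.I)).im)
      (Set.uIcc (0:ℝ) (2*π)) :=
    Complex.continuous_im.comp_continuousOn
      (contOn_Ed f hd hZ (hZ.mul continuousOn_const) hmapsC)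
  have hsmul : s * (∫ t in (0:ℝ)..(2*π),
      (Ed f ((s:ℂ)*Complex.exp ((t:ℂ)*Complex.I)) (Complex.exp ((t:ℂ)*Complex.I))).re)
      = s * (4 * (s * ∫ t in (0:ℝ)..(2*π),
          (sphDeriv f ((s:ℂ)*Complex.exp ((t:ℂ)*Complex.I)))^2)) := by
    rw [← intervalIntegral.integral_const_mul]
    have : (∫ t in (0:ℝ)..(2*π), s * (Ed f ((s:ℂ)*Complex.exp ((t:ℂ)*Complex.I))
        (Complex.exp ((t:ℂ)*Complex.I))).re)
        = ∫ t in (0:ℝ)..(2*π), (4*s^2*(sphDeriv f ((s:ℂ)*Complex.exp ((t:ℂ)*Complex.I)))^2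
          + (Ed f ((s:ℂ)*Complex.exp ((t:ℂ)*Complex.I))
              (((s:ℂ)*Complex.exp ((t:ℂ)*Complex.I)) * Complex.I)).im) := by
      exact intervalIntegral.integral_congr (fun t _ => hkey t)
    rw [this, intervalIntegral.integral_add
      (hsphcont.intervalIntegrable.const_mul (4*s^2)) hEdIm.intervalIntegrable,
      intIm_zero f hd hsr hr1, add_zero, intervalIntegral.integral_const_mul]
    ring
  exact mul_left_cancel₀ hs0 hsmul

end GBAux4
section GBFinal
open Metric Filter Topology intervalIntegral

lemma hfun_eq (f : ℂ → ℂ) (z : ℂ) :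
    hfun f z = 1 + (z * deriv (deriv f) z / deriv f z).re - (Qf f z).re := by
  unfold hfun Qf
  rw [den_cast]
  simp [Complex.sub_re, Complex.add_re, Complex.one_re]

end GBFinal

/-- Gauss–Bonnet identity: total spherical curvature of `f(r𝕋)` equals
`2π − 4 Ar_S f(r𝔻)`. -/
theorem gauss_bonnet (f : ℂ → ℂ)
    (hd : DifferentiableOn ℂ f (Metric.ball 0 1))
    (hi : Set.InjOn f (Metric.ball 0 1)) :
    ∀ r ∈ Set.Ioo (0 : ℝ) 1,
      (∫ t in (0 : ℝ)..(2 * π), hfun f ((r : ℂ) * Complex.exp (t * Complex.I))) =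
        2 * π - 4 * ∫ z in Metric.ball (0 : ℂ) r, sphDeriv f z ^ 2 := by
  intro r hr
  obtain ⟨hr0, hr1⟩ := hr
  have hne := deriv_ne_zero_of_injOn f hd hi
  have hsplit : (∫ t in (0:ℝ)..(2*π), hfun f ((r:ℂ) * Complex.exp (t * Complex.I)))
      = ∫ t in (0:ℝ)..(2*π),
          (1 + (((r:ℂ) * Complex.exp ((t:ℂ) * Complex.I)) *
              deriv (deriv f) ((r:ℂ) * Complex.exp ((t:ℂ) * Complex.I)) /
              deriv f ((r:ℂ) * Complex.exp ((t:ℂ) * Complex.I))).re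
            - (Qf f ((r:ℂ) * Complex.exp ((t:ℂ) * Complex.I))).re) :=
    intervalIntegral.integral_congr (fun t _ => hfun_eq f _)
  rw [hsplit]
  have hmaps : ∀ t ∈ Set.uIcc (0:ℝ) (2*π),
      (r:ℂ) * Complex.exp ((t:ℂ) * Complex.I) ∈ Metric.ball (0:ℂ) 1 :=
    fun t _ => circle_mem_ball (le_of_eq (abs_of_pos hr0)) hr1 t
  have hZ : ContinuousOn (fun t : ℝ => (r:ℂ) * Complex.exp ((t:ℂ)*Complex.I))
      (Set.uIcc (0:ℝ) (2*π)) := contOn_circle_map r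
  have hG1 : ContinuousOn (fun t : ℝ =>
      (((r:ℂ) * Complex.exp ((t:ℂ) * Complex.I)) *
        deriv (deriv f) ((r:ℂ) * Complex.exp ((t:ℂ) * Complex.I)) /
        deriv f ((r:ℂ) * Complex.exp ((t:ℂ) * Complex.I))).re)
      (Set.uIcc (0:ℝ) (2*π)) := by
    refine Complex.continuous_re.comp_continuousOn ?_
    exact ((hZ.mul ((contOn_ddf f hd).comp hZ hmaps)).div
      ((contOn_df f hd).comp hZ hmaps) (fun t ht => hne _ (hmaps t ht)))
  have hG2 : ContinuousOn (fun t : ℝ =>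
      (Qf f ((r:ℂ) * Complex.exp ((t:ℂ) * Complex.I))).re) (Set.uIcc (0:ℝ) (2*π)) :=
    Complex.continuous_re.comp_continuousOn (contOn_Qf f hd hZ hmaps)
  rw [intervalIntegral.integral_sub
    (intervalIntegrable_const.add hG1.intervalIntegrable) hG2.intervalIntegrable]
  rw [intervalIntegral.integral_add intervalIntegrable_const hG1.intervalIntegrable]
  rw [intervalIntegral.integral_const]
  rw [partA f hd hi hr0 hr1, partB f hd hr0 hr1]
  simp
end

section
/- Let f be a holomorphic function on the unit disk 𝔻 with f′(z) ≠ 0 for all z ∈ 𝔻. Then for every t ∈ [0,2π] and every r ∈ (0,1), the radial derivative identity ∂/∂r [ (1+r²) f♯(re^{it}) ] = (f♯(re^{it})/r) · [ (1+r²) h_f(re^{it}) − (1−r²) ] holds; equivalently, r · ∂/∂r log[(1+r²) f♯(re^{it})] = h_f(re^{it}) − (1−r²)/(1+r²). -/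
open Complex MeasureTheory Set Real

/-!
Along the ray `ρ ↦ ρ e`, `log f♯ = log |f'| - log (1 + |f|²)` has derivative
`Re (e f''/f') - 2 Re (e f' conj f) / (1 + |f|²) = Re (e L)` with
`L = f''/f' - 2 f' conj f / (1 + |f|²)`. Since `h_f(z) = 1 + Re (z L)`, at `z = r e` this is
`(h_f - 1) / r`; adding the contribution `2 r / (1 + r²)` of the factor `1 + ρ²` gives both
forms of the identity.
-/

open ComplexConjugate
open scoped InnerProductSpace

theorem HasDerivAt.norm {F : Type*} [NormedAddCommGroup F] [InnerProductSpace ℝ F]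
    {g : ℝ → F} {g' : F} {x : ℝ} (hg : HasDerivAt g g' x) (h0 : g x ≠ 0) :
    HasDerivAt (‖g ·‖) (⟪g x, g'⟫_ℝ / ‖g x‖) x := by
  have hpos : 0 < ‖g x‖ := norm_pos_iff.mpr h0
  convert hg.norm_sq.sqrt (by positivity) using 1
  · simp only [Real.sqrt_sq (norm_nonneg _)]
  · rw [Real.sqrt_sq hpos.le]
    field_simp

theorem HasDerivAt.norm_complex {g : ℝ → ℂ} {g' : ℂ} {x : ℝ} (hg : HasDerivAt g g' x)
    (h0 : g x ≠ 0) : HasDerivAt (‖g ·‖) (‖g x‖ * (g' / g x).re) x := by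
  convert hg.norm h0 using 1
  have hpos : 0 < ‖g x‖ := norm_pos_iff.mpr h0
  rw [Complex.inner, div_eq_mul_inv, Complex.inv_def, ← mul_assoc, Complex.re_mul_ofReal,
    ← Complex.sq_norm]
  field_simp

theorem HasDerivAt.comp_ofReal_mul {f : ℂ → ℂ} {f' e : ℂ} {r : ℝ}
    (hf : HasDerivAt f f' (r * e)) :
    HasDerivAt (fun ρ : ℝ => f (ρ * e)) (f' * e) r := by
  simpa using (hf.comp (r : ℂ) (hasDerivAt_mul_const e)).comp_ofReal

/-- The quantity `L = 2 ∂_z log f♯`. -/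
noncomputable def sphLogDeriv (f : ℂ → ℂ) (z : ℂ) : ℂ :=
  deriv (deriv f) z / deriv f z - 2 * deriv f z * conj (f z) / ((1 + ‖f z‖ ^ 2 : ℝ) : ℂ)

theorem hfun_eq_one_add_re_mul_sphLogDeriv (f : ℂ → ℂ) (z : ℂ) :
    hfun f z = 1 + (z * sphLogDeriv f z).re := by
  rw [hfun, sphLogDeriv, ← Complex.one_re, ← Complex.add_re]
  ring_nf

theorem hasDerivAt_sphDeriv_ray {f : ℂ → ℂ} {e : ℂ} {r : ℝ}
    (hf : DifferentiableAt ℂ f (r * e)) (hf' : DifferentiableAt ℂ (deriv f) (r * e))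
    (h0 : deriv f (r * e) ≠ 0) :
    HasDerivAt (fun ρ : ℝ => sphDeriv f (ρ * e))
      (sphDeriv f (r * e) * (e * sphLogDeriv f (r * e)).re) r := by
  have hnum := (hf'.hasDerivAt.comp_ofReal_mul).norm_complex h0
  have hden := ((hf.hasDerivAt.comp_ofReal_mul).norm_sq).const_add 1
  have hb : 0 < 1 + ‖f (r * e)‖ ^ 2 := by positivity
  have hre : (e * sphLogDeriv f (r * e)).re = (deriv (deriv f) (r * e) * e / deriv f (r * e)).re -
      2 * (deriv f (r * e) * e * conj (f (r * e))).re / (1 + ‖f (r * e)‖ ^ 2) := by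
    rw [sphLogDeriv, mul_sub, Complex.sub_re, mul_div_assoc', mul_div_assoc', mul_comm e,
      Complex.div_ofReal_re, show e * (2 * deriv f (r * e) * conj (f (r * e))) =
        (2 : ℝ) * (deriv f (r * e) * e * conj (f (r * e))) by push_cast; ring,
      Complex.re_ofReal_mul]
  refine (hnum.div hden hb.ne').congr_deriv ?_
  rw [sphDeriv, hre, Complex.inner]
  field_simp

theorem hasDerivAt_sphDeriv_radial {f : ℂ → ℂ} {e : ℂ} {r : ℝ}
    (hf : DifferentiableAt ℂ f (r * e)) (hf' : DifferentiableAt ℂ (deriv f) (r * e))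
    (h0 : deriv f (r * e) ≠ 0) (hr : r ≠ 0) :
    HasDerivAt (fun ρ : ℝ => sphDeriv f (ρ * e))
      (sphDeriv f (r * e) * (hfun f (r * e) - 1) / r) r := by
  refine (hasDerivAt_sphDeriv_ray hf hf' h0).congr_deriv ?_
  rw [hfun_eq_one_add_re_mul_sphLogDeriv, add_sub_cancel_left, mul_assoc, Complex.re_ofReal_mul]
  field_simp

theorem sphDeriv_pos {f : ℂ → ℂ} {z : ℂ} (h0 : deriv f z ≠ 0) : 0 < sphDeriv f z :=
  div_pos (norm_pos_iff.mpr h0) (by positivity)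

theorem hasDerivAt_one_add_sq_mul {φ : ℝ → ℝ} {r h : ℝ} (hr : r ≠ 0)
    (hφ : HasDerivAt φ (φ r * (h - 1) / r) r) :
    HasDerivAt (fun ρ => (1 + ρ ^ 2) * φ ρ) (φ r / r * ((1 + r ^ 2) * h - (1 - r ^ 2))) r := by
  refine (((hasDerivAt_pow 2 r).const_add 1).mul hφ).congr_deriv ?_
  field_simp
  ring

theorem mul_deriv_log_one_add_sq_mul {φ : ℝ → ℝ} {r h : ℝ} (hr : r ≠ 0) (hφr : 0 < φ r)
    (hφ : HasDerivAt φ (φ r * (h - 1) / r) r) :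
    r * deriv (fun ρ => Real.log ((1 + ρ ^ 2) * φ ρ)) r = h - (1 - r ^ 2) / (1 + r ^ 2) := by
  rw [((hasDerivAt_one_add_sq_mul hr hφ).log (by positivity)).deriv]
  field_simp

/-- Radial derivative identity for `(1+r²) f♯(re^{it})`. -/
theorem radial_derivative_identity (f : ℂ → ℂ)
    (hd : DifferentiableOn ℂ f (Metric.ball 0 1))
    (hd' : ∀ z ∈ Metric.ball (0 : ℂ) 1, deriv f z ≠ 0) :
    ∀ t ∈ Set.Icc (0 : ℝ) (2 * π), ∀ r ∈ Set.Ioo (0 : ℝ) 1,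
      deriv (fun ρ : ℝ =>
          (1 + ρ ^ 2) * sphDeriv f ((ρ : ℂ) * Complex.exp (t * Complex.I))) r =
        sphDeriv f ((r : ℂ) * Complex.exp (t * Complex.I)) / r *
          ((1 + r ^ 2) * hfun f ((r : ℂ) * Complex.exp (t * Complex.I)) -
            (1 - r ^ 2)) ∧
      r * deriv (fun ρ : ℝ =>
          Real.log ((1 + ρ ^ 2) *
            sphDeriv f ((ρ : ℂ) * Complex.exp (t * Complex.I)))) r =
        hfun f ((r : ℂ) * Complex.exp (t * Complex.I)) -
          (1 - r ^ 2) / (1 + r ^ 2) := by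
  intro t _ r ⟨hr0, hr1⟩
  have hz : (r : ℂ) * Complex.exp (t * Complex.I) ∈ Metric.ball (0 : ℂ) 1 := by
    simpa [norm_mul, Complex.norm_exp_ofReal_mul_I, abs_of_pos hr0] using hr1
  have han : AnalyticOnNhd ℂ f (Metric.ball 0 1) := hd.analyticOnNhd Metric.isOpen_ball
  have hφ := hasDerivAt_sphDeriv_radial (han _ hz).differentiableAt
    (han.deriv _ hz).differentiableAt (hd' _ hz) hr0.ne'
  exact ⟨(hasDerivAt_one_add_sq_mul hr0.ne' hφ).deriv,
    mul_deriv_log_one_add_sq_mul hr0.ne' (sphDeriv_pos (hd' _ hz)) hφ⟩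
end
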